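/- Let ℓ ≥ 1 and α_1,…,α_ℓ, β_1,…,β_ℓ be positive integers. Then evaluating the iterated operator expression at t = 1 gives the duality: R^{α_1}[y^{β_1}·…·R^{α_ℓ}[y^{β_ℓ}]…](1) = R^{β_ℓ}[y^{α_ℓ}·…·R^{β_1}[y^{α_1}]…](1), both sides converging as formal power series in q. -/

import Mathlib

open PowerSeries

noncomputable section

/-- `Q[[q]]`. -/
abbrev Qq : Type := PowerSeries ℚ

/-- `Q[[t,q]]`, viewed as power series in `t` with coefficients in `Q[[q]]`. -/
abbrev QQtq : Type := PowerSeries Qq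

/-- The geometric series `Σ_{k≥0} q^{k n}` (set to `0` at `n = 0`, where the sum diverges;
this value is never used on `t·Q[[t,q]]`). -/
def geomP (n : ℕ) : Qq :=
  if n = 0 then 0 else PowerSeries.mk fun m => if n ∣ m then (1 : ℚ) else 0

/-- The geometric series `Σ_{k≥1} q^{k n}` (set to `0` at `n = 0`). -/
def geomR (n : ℕ) : Qq :=
  if n = 0 then 0 else PowerSeries.mk fun m => if n ∣ m ∧ m ≠ 0 then (1 : ℚ) else 0

/-- `P[f](t) = Σ_{k≥0} f(q^k t)`: on the `t^n`-coefficient this multiplies by `Σ_{k≥0} q^{kn}`. -/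
def Pop (f : QQtq) : QQtq :=
  PowerSeries.mk fun n => geomP n * PowerSeries.coeff (R := Qq) n f

/-- `R[f](t) = Σ_{k≥1} f(q^k t)`: on the `t^n`-coefficient this multiplies by `Σ_{k≥1} q^{kn}`. -/
def Rop (f : QQtq) : QQtq :=
  PowerSeries.mk fun n => geomR n * PowerSeries.coeff (R := Qq) n f

/-- The q-expanding operator `E[f](t) = f(qt)`. -/
def Eop (f : QQtq) : QQtq :=
  PowerSeries.mk fun n => (PowerSeries.X : Qq) ^ n * PowerSeries.coeff (R := Qq) n f

/-- The q-difference operator `D = id - E`, i.e. `D[f](t) = f(t) - f(qt)`. -/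
def Dop (f : QQtq) : QQtq := f - Eop f

/-- `y(t) = t/(1-t) = Σ_{ℓ≥1} t^ℓ`. -/
def yser : QQtq := PowerSeries.mk fun n => if n = 0 then (0 : Qq) else 1

/-- The iterated operator expression `R^{α_1}[y^{β_1}·R^{α_2}[y^{β_2}·…·R^{α_ℓ}[y^{β_ℓ}]…]]`. -/
def iterRY : List (ℕ × ℕ) → QQtq
  | [] => 1
  | p :: rest => Rop^[p.1] (yser ^ p.2 * iterRY rest)

/-- Evaluation at `t = 1`: the formal sum `Σ_n c_n ∈ Q[[q]]` of the `t`-coefficients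
(the `q^m`-coefficient only receives contributions from `n ≤ m`). -/
def ev1 (f : QQtq) : Qq :=
  PowerSeries.mk fun m =>
    ∑ n ∈ Finset.range (m + 1), PowerSeries.coeff (R := ℚ) m (PowerSeries.coeff (R := Qq) n f)

/-!
Expanding `y^β = Σ_j binom(j-1, β-1) t^j` and letting `R^α` act on `t^n` by
`(q^n/(1-q^n))^α = Σ_k binom(k-1, α-1) q^{kn}`, the `q^m`-coefficient of
`R^{α_1}[y^{β_1}·…·R^{α_ℓ}[y^{β_ℓ}]…](1)` becomes a weighted count of tuples `(j_r, k_r)_r` of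
positive integers with `Σ_r k_r (j_r + ⋯ + j_ℓ) = m`. This exponent is `Σ_{r ≤ s} k_r j_s`, so it is
invariant under the involution `(j_r, k_r) ↦ (k_{ℓ+1-r}, j_{ℓ+1-r})`, which also carries the weights
for `(α, β)` to those for the reversed and swapped data `(β_{ℓ+1-r}, α_{ℓ+1-r})`.
-/

open Finset

lemma geomR_eq_expand {n : ℕ} (hn : n ≠ 0) : geomR n = expand n hn (geomR 1) := by
  ext u
  rw [coeff_expand]
  by_cases hd : n ∣ u
  · obtain ⟨k, rfl⟩ := hd
    simp [geomR, hn, Nat.mul_div_cancel_left k (Nat.pos_of_ne_zero hn)]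
  · simp [geomR, hn, hd]

lemma yser_eq_map_geomR_one : yser = map C (geomR 1) := by
  ext n : 1
  simp [yser, geomR]

lemma coeff_zero_geomR_one_pow {b : ℕ} (hb : b ≠ 0) : coeff 0 (geomR 1 ^ b) = 0 := by
  simp [geomR, coeff_zero_eq_constantCoeff, hb]

lemma coeff_Rop_iterate (a n : ℕ) (f : QQtq) : coeff n (Rop^[a] f) = geomR n ^ a * coeff n f := by
  induction a generalizing f with
  | zero => simp
  | succ a ih => rw [Function.iterate_succ_apply, ih, Rop, coeff_mk, pow_succ, mul_assoc]

namespace PowerSeries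

theorem coeff_expand_mul_eq_sum {R : Type*} [CommRing R] {p : ℕ} (hp : p ≠ 0) (φ ψ : R⟦X⟧)
    (m : ℕ) :
    coeff m (expand p hp φ * ψ) = ∑ k ∈ range (m / p + 1), coeff k φ * coeff (m - p * k) ψ := by
  rw [coeff_mul,
    Nat.sum_antidiagonal_eq_sum_range_succ fun u v => coeff u (expand p hp φ) * coeff v ψ]
  have hsub : (range (m / p + 1)).map ⟨(p * ·), mul_right_injective₀ hp⟩ ⊆ range (m + 1) := by
    intro u hu
    simp only [mem_map, mem_range, Function.Embedding.coeFn_mk] at hu ⊢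
    obtain ⟨k, hk, rfl⟩ := hu
    have := (Nat.le_div_iff_mul_le (Nat.pos_of_ne_zero hp)).1 (Nat.lt_succ_iff.1 hk)
    linarith
  rw [← sum_subset hsub, sum_map]
  · simp [coeff_expand_mul]
  · intro u hum hu
    rw [coeff_expand, if_neg, zero_mul]
    rintro ⟨k, rfl⟩
    refine hu (mem_map.2 ⟨k, ?_, rfl⟩)
    rw [mem_range, Nat.lt_succ_iff, Nat.le_div_iff_mul_le (Nat.pos_of_ne_zero hp)]
    rw [mem_range] at hum
    linarith

end PowerSeries

lemma coeff_zero_yser_pow_mul {b : ℕ} (hb : b ≠ 0) (F : QQtq) : coeff 0 (yser ^ b * F) = 0 := by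
  rw [yser_eq_map_geomR_one, ← map_pow, coeff_zero_eq_constantCoeff_apply, map_mul,
    ← coeff_zero_eq_constantCoeff_apply, coeff_map, coeff_zero_geomR_one_pow hb, map_zero, zero_mul]

lemma coeff_coeff_Rop_iterate_yser_pow_mul {n : ℕ} (hn : n ≠ 0) (a b m : ℕ) (F : QQtq) :
    coeff m (coeff n (Rop^[a] (yser ^ b * F))) =
      ∑ j ∈ range (n + 1), ∑ k ∈ range (m / n + 1),
        coeff j (geomR 1 ^ b) * coeff k (geomR 1 ^ a) * coeff (m - n * k) (coeff (n - j) F) := by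
  rw [coeff_Rop_iterate, geomR_eq_expand hn, ← map_pow, coeff_expand_mul_eq_sum, sum_comm]
  refine sum_congr rfl fun k _ => ?_
  rw [coeff_mul, Nat.sum_antidiagonal_eq_sum_range_succ_mk, map_sum, mul_sum]
  refine sum_congr rfl fun j _ => ?_
  rw [yser_eq_map_geomR_one, ← map_pow, coeff_map, coeff_C_mul]
  ring

lemma sum_range_ite_le {M : Type*} [AddCommMonoid M] {n N : ℕ} (h : n ≤ N) (f : ℕ → M) :
    ∑ j ∈ range (N + 1), (if j ≤ n then f j else 0) = ∑ j ∈ range (n + 1), f j := by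
  rw [← sum_filter]
  congr 1
  ext j
  simp only [mem_filter, mem_range]
  omega

lemma coeff_coeff_Rop_iterate_yser_pow_mul_of_le {a b N n m : ℕ} (hb : b ≠ 0) (hn : n ≤ N)
    (hm : m ≤ N) (F : QQtq) :
    coeff m (coeff n (Rop^[a] (yser ^ b * F))) =
      ∑ jk ∈ range (N + 1) ×ˢ range (N + 1), if jk.1 ≤ n ∧ n * jk.2 ≤ m then
        coeff jk.1 (geomR 1 ^ b) * coeff jk.2 (geomR 1 ^ a) *
          coeff (m - n * jk.2) (coeff (n - jk.1) F)
      else 0 := by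
  rcases Nat.eq_zero_or_pos n with rfl | hn0
  · rw [coeff_Rop_iterate, coeff_zero_yser_pow_mul hb, mul_zero, map_zero]
    refine (sum_eq_zero fun jk _ => ?_).symm
    split_ifs with h
    · rw [Nat.le_zero.1 h.1, coeff_zero_geomR_one_pow hb, zero_mul, zero_mul]
    · rfl
  · rw [coeff_coeff_Rop_iterate_yser_pow_mul hn0.ne', sum_product, ← sum_range_ite_le hn]
    refine sum_congr rfl fun j _ => ?_
    split_ifs with hj
    · rw [← sum_range_ite_le ((Nat.div_le_self m n).trans hm)]
      refine sum_congr rfl fun k _ => ?_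
      simp only [hj, true_and, Nat.le_div_iff_mul_le hn0, mul_comm n k]
    · simp [hj]

section Tuples

variable {ℓ : ℕ}

/-- `jk r = (j_r, k_r)` indexes the monomial `t ^ tDeg jk * q ^ qDeg jk` of the expansion, with
coefficient `weight p jk` when `p r = (α_r, β_r)`; note `coeff j (geomR 1 ^ b) = binom(j-1, b-1)`,
as `geomR 1 = q/(1-q)`. -/
def tDeg (jk : Fin ℓ → ℕ × ℕ) : ℕ := ∑ r, (jk r).1

def qDeg (jk : Fin ℓ → ℕ × ℕ) : ℕ := ∑ r, ∑ s, if r ≤ s then (jk r).2 * (jk s).1 else 0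

def weight (p jk : Fin ℓ → ℕ × ℕ) : ℚ :=
  ∏ r, coeff (jk r).1 (geomR 1 ^ (p r).2) * coeff (jk r).2 (geomR 1 ^ (p r).1)

def boundedTuples (ℓ N : ℕ) : Finset (Fin ℓ → ℕ × ℕ) :=
  Fintype.piFinset fun _ => range (N + 1) ×ˢ range (N + 1)

def dual (x : Fin ℓ → ℕ × ℕ) : Fin ℓ → ℕ × ℕ := fun r => (x r.rev).swap

lemma tDeg_cons (q : ℕ × ℕ) (jk : Fin ℓ → ℕ × ℕ) :
    tDeg (Fin.cons q jk : Fin (ℓ + 1) → ℕ × ℕ) = q.1 + tDeg jk := by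
  simp [tDeg, Fin.sum_univ_succ]

lemma qDeg_cons (q : ℕ × ℕ) (jk : Fin ℓ → ℕ × ℕ) :
    qDeg (Fin.cons q jk : Fin (ℓ + 1) → ℕ × ℕ) = (q.1 + tDeg jk) * q.2 + qDeg jk := by
  simp [qDeg, tDeg, Fin.sum_univ_succ, Fin.succ_le_succ_iff, ← mul_sum]
  ring

lemma weight_cons (p : Fin (ℓ + 1) → ℕ × ℕ) (q : ℕ × ℕ) (jk : Fin ℓ → ℕ × ℕ) :
    weight p (Fin.cons q jk) =
      coeff q.1 (geomR 1 ^ (p 0).2) * coeff q.2 (geomR 1 ^ (p 0).1) *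
        weight (fun i => p i.succ) jk := by
  simp [weight, Fin.prod_univ_succ]

lemma sum_boundedTuples_succ {M : Type*} [AddCommMonoid M] (N : ℕ)
    (f : (Fin (ℓ + 1) → ℕ × ℕ) → M) :
    ∑ jk ∈ boundedTuples (ℓ + 1) N, f jk =
      ∑ q ∈ (range (N + 1) ×ˢ range (N + 1)) ×ˢ boundedTuples ℓ N, f (Fin.cons q.1 q.2) := by
  refine sum_equiv (Fin.consEquiv fun _ => ℕ × ℕ).symm (fun jk => ?_) (fun jk _ => ?_)
  · simp [boundedTuples, Fin.consEquiv, Fin.forall_fin_succ, Fin.tail]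
  · simp [Fin.consEquiv]

theorem coeff_coeff_iterRY_ofFn (p : Fin ℓ → ℕ × ℕ) (hp : ∀ r, (p r).2 ≠ 0) {N n m : ℕ}
    (hn : n ≤ N) (hm : m ≤ N) :
    coeff m (coeff n (iterRY (List.ofFn p))) =
      ∑ jk ∈ boundedTuples ℓ N with tDeg jk = n ∧ qDeg jk = m, weight p jk := by
  induction ℓ generalizing n m with
  | zero =>
    by_cases h : n = 0 <;> by_cases h' : m = 0 <;>
      simp [iterRY, boundedTuples, tDeg, qDeg, weight, coeff_one, h, h', eq_comm]
  | succ ℓ ih =>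
    rw [List.ofFn_succ, iterRY, coeff_coeff_Rop_iterate_yser_pow_mul_of_le (hp 0) hn hm, sum_filter,
      sum_boundedTuples_succ, sum_product (t := boundedTuples ℓ N)]
    refine sum_congr rfl fun ⟨j, k⟩ _ => ?_
    simp only [tDeg_cons, qDeg_cons, weight_cons]
    split_ifs with h
    · rw [ih (fun i => p i.succ) (fun r => hp r.succ) (by omega) (by omega), sum_filter, mul_sum]
      refine sum_congr rfl fun jk _ => ?_
      rw [mul_ite, mul_zero]
      refine if_congr ⟨fun ⟨h1, h2⟩ => ?_, fun ⟨h1, h2⟩ => ?_⟩ rfl rfl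
      · rw [show j + tDeg jk = n by omega]
        omega
      · rw [h1] at h2
        omega
    · refine (sum_eq_zero fun jk _ => if_neg ?_).symm
      rintro ⟨h1, h2⟩
      rw [h1] at h2
      omega

lemma snd_ne_zero_of_weight_ne_zero {p jk : Fin ℓ → ℕ × ℕ} (hp : ∀ r, (p r).1 ≠ 0)
    (h : weight p jk ≠ 0) (r : Fin ℓ) : (jk r).2 ≠ 0 := by
  intro hr
  refine h (prod_eq_zero (mem_univ r) ?_)
  rw [hr, coeff_zero_geomR_one_pow (hp r), mul_zero]

lemma tDeg_le_qDeg_of_weight_ne_zero {p jk : Fin ℓ → ℕ × ℕ} (hp : ∀ r, (p r).1 ≠ 0)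
    (h : weight p jk ≠ 0) : tDeg jk ≤ qDeg jk := by
  refine sum_le_sum fun r _ => ?_
  calc (jk r).1 ≤ (jk r).2 * (jk r).1 :=
        Nat.le_mul_of_pos_left _ (Nat.pos_of_ne_zero (snd_ne_zero_of_weight_ne_zero hp h r))
    _ ≤ ∑ s, if r ≤ s then (jk r).2 * (jk s).1 else 0 := by
        simpa using single_le_sum (f := fun s => if r ≤ s then (jk r).2 * (jk s).1 else 0)
          (fun _ _ => Nat.zero_le _) (mem_univ r)

theorem coeff_ev1_iterRY_ofFn (p : Fin ℓ → ℕ × ℕ) (ha : ∀ r, (p r).1 ≠ 0)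
    (hb : ∀ r, (p r).2 ≠ 0) (m : ℕ) :
    coeff m (ev1 (iterRY (List.ofFn p))) =
      ∑ jk ∈ boundedTuples ℓ m with qDeg jk = m, weight p jk := by
  rw [ev1, coeff_mk]
  calc _ = ∑ n ∈ range (m + 1),
        ∑ jk ∈ {jk ∈ boundedTuples ℓ m | qDeg jk = m} with tDeg jk = n, weight p jk := by
        refine sum_congr rfl fun n hn => ?_
        rw [coeff_coeff_iterRY_ofFn p hb (mem_range_succ_iff.1 hn) le_rfl, filter_filter]
        simp_rw [and_comm]
    _ = ∑ jk ∈ {jk ∈ boundedTuples ℓ m | qDeg jk = m} with tDeg jk ∈ range (m + 1),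
          weight p jk :=
        sum_fiberwise_eq_sum_filter _ _ _ _
    _ = _ := sum_filter_of_ne fun jk hjk hw => mem_range.2 <| Nat.lt_succ_of_le <|
        (tDeg_le_qDeg_of_weight_ne_zero ha hw).trans_eq (mem_filter.1 hjk).2

lemma dual_involutive : Function.Involutive (dual (ℓ := ℓ)) := fun x => by
  funext r
  simp [dual]

lemma dual_mem_boundedTuples_iff {N : ℕ} {x : Fin ℓ → ℕ × ℕ} :
    dual x ∈ boundedTuples ℓ N ↔ x ∈ boundedTuples ℓ N := by
  simp only [boundedTuples, Fintype.mem_piFinset, dual, mem_product, Prod.fst_swap, Prod.snd_swap]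
  constructor <;> intro h r
  · simpa [and_comm] using h r.rev
  · exact (h r.rev).symm

lemma qDeg_dual (jk : Fin ℓ → ℕ × ℕ) : qDeg (dual jk) = qDeg jk := by
  rw [qDeg, sum_comm]
  refine Fintype.sum_equiv Fin.revPerm _ _ fun s => Fintype.sum_equiv Fin.revPerm _ _ fun r => ?_
  simp [dual, mul_comm]

lemma weight_dual (p jk : Fin ℓ → ℕ × ℕ) : weight (dual p) (dual jk) = weight p jk :=
  Fintype.prod_equiv Fin.revPerm _ _ fun r => by simp [dual, mul_comm]

theorem sum_weight_dual (p : Fin ℓ → ℕ × ℕ) (N m : ℕ) :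
    ∑ jk ∈ boundedTuples ℓ N with qDeg jk = m, weight (dual p) jk =
      ∑ jk ∈ boundedTuples ℓ N with qDeg jk = m, weight p jk := by
  refine sum_equiv dual_involutive.toPerm (fun jk => ?_) (fun jk _ => ?_)
  · simp [dual_mem_boundedTuples_iff, qDeg_dual]
  · rw [Function.Involutive.coe_toPerm, ← weight_dual, dual_involutive]

end Tuples

theorem iterRY_duality_general (ℓ : ℕ) (α β : Fin ℓ → ℕ)
    (hα : ∀ r, 0 < α r) (hβ : ∀ r, 0 < β r) :
    ev1 (iterRY (List.ofFn fun r => (α r, β r)))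
      = ev1 (iterRY (List.ofFn fun r => (β r.rev, α r.rev))) := by
  set p : Fin ℓ → ℕ × ℕ := fun r => (α r, β r)
  have hdual : (fun r => (β r.rev, α r.rev)) = dual p := rfl
  ext m
  rw [hdual, coeff_ev1_iterRY_ofFn p (fun r => (hα r).ne') (fun r => (hβ r).ne'),
    coeff_ev1_iterRY_ofFn (dual p) (fun r => (hβ _).ne') (fun r => (hα _).ne'), sum_weight_dual]

/-- the duality
`R^{α_1}[y^{β_1}·…·R^{α_ℓ}[y^{β_ℓ}]…](1) = R^{β_ℓ}[y^{α_ℓ}·…·R^{β_1}[y^{α_1}]…](1)`. -/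
theorem iterRY_duality (ℓ : ℕ) (hℓ : 0 < ℓ) (α β : Fin ℓ → ℕ)
    (hα : ∀ r, 0 < α r) (hβ : ∀ r, 0 < β r) :
    ev1 (iterRY (List.ofFn fun r => (α r, β r)))
      = ev1 (iterRY (List.ofFn fun r => (β r.rev, α r.rev))) :=
  iterRY_duality_general ℓ α β hα hβ
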